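/- Let D: Corr(C,E) → Cat_∞ be a two-functor formalism on a geometric set-up (C,E), and let f: X → Y be a morphism in E. Then: (1) if f satisfies (Pr-I) stably, then f satisfies (Pr-II); (2) if f satisfies (Pr-II) stably, then f satisfies (Pr-I); (3) if f satisfies (Ét-I) stably, then f satisfies (Ét-II); (4) if f satisfies (Ét-II) stably, then f satisfies (Ét-I). -/

import Mathlib

open CategoryTheory CategoryTheory.Limits

universe w₂ w₁ v u

namespace SixFunctor

variable {C : Type u} [Category.{v} C]

/-- A commuting square of categories (with commutativity witness `sq : t ⋙ r ≅ l ⋙ b`)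
is *vertically right adjointable* if the vertical functors `l`, `r` admit right adjoints
and the associated mate transformation is an isomorphism. -/
def VertRightAdj {A B A' B' : Cat.{w₁, w₂}} (t : A ⥤ B) (l : A ⥤ A') (r : B ⥤ B')
    (b : A' ⥤ B') (sq : t ⋙ r ≅ l ⋙ b) : Prop :=
  ∃ (lR : A' ⥤ A) (rR : B' ⥤ B) (adj₁ : l ⊣ lR) (adj₂ : r ⊣ rR),
    IsIso (mateEquiv adj₁ adj₂ sq.hom)

/-- Vertically left adjointable squares. -/
def VertLeftAdj {A B A' B' : Cat.{w₁, w₂}} (t : A ⥤ B) (l : A ⥤ A') (r : B ⥤ B')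
    (b : A' ⥤ B') (sq : t ⋙ r ≅ l ⋙ b) : Prop :=
  ∃ (lL : A' ⥤ A) (rL : B' ⥤ B) (adj₁ : lL ⊣ l) (adj₂ : rL ⊣ r),
    IsIso ((mateEquiv adj₁ adj₂).symm sq.inv)

/-- The pullback/inverse image part of a formalism: a (pseudo)functor `Cᵒᵖ → Cat`. -/
structure PreBC (C : Type u) [Category.{v} C] where
  D : C → Cat.{w₁, w₂}
  pull : ∀ {X Y : C}, (X ⟶ Y) → ((D Y : Type w₂) ⥤ (D X : Type w₂))
  pullId : ∀ X : C, pull (𝟙 X) ≅ 𝟭 (D X)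
  pullComp : ∀ {X Y Z : C} (f : X ⟶ Y) (g : Y ⟶ Z), pull (f ≫ g) ≅ pull g ⋙ pull f

/-- A two-functor formalism on a geometric set-up `(C, E)`: inverse images `f^*` for all
morphisms, exceptional direct images `f_!` for morphisms in `E`, together with the
(co)herence isomorphisms and base change isomorphisms encoded by a functor
`Corr(C,E) → Cat`. -/
structure TwoFF (C : Type u) [Category.{v} C] (E : MorphismProperty C) extends
    PreBC.{w₂, w₁} C where
  push : ∀ {X Y : C} (f : X ⟶ Y), E f → ((D X : Type w₂) ⥤ (D Y : Type w₂))
  pushId : ∀ (X : C) (h : E (𝟙 X)), push (𝟙 X) h ≅ 𝟭 (D X)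
  pushComp : ∀ {X Y Z : C} (f : X ⟶ Y) (g : Y ⟶ Z) (hf : E f) (hg : E g) (hfg : E (f ≫ g)),
    push (f ≫ g) hfg ≅ push f hf ⋙ push g hg
  baseChange : ∀ {W X Y' Y : C} {gbar : W ⟶ X} {fbar : W ⟶ Y'} {f : X ⟶ Y} {g : Y' ⟶ Y},
    IsPullback gbar fbar f g → ∀ (hf : E f) (hfbar : E fbar),
      push f hf ⋙ pull g ≅ pull gbar ⋙ push fbar hfbar

variable [HasPullbacks C]

/-- `n`-truncatedness (shifted by 2): `IsTrunc 0 f` means `f` is `(-2)`-truncated,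
i.e. an isomorphism, and `IsTrunc (n+1) f` means the diagonal of `f` is `IsTrunc n`. -/
def IsTrunc : ℕ → ∀ {X Y : C}, (X ⟶ Y) → Prop
  | 0, _, _, f => IsIso f
  | n + 1, _, _, f => IsTrunc n (pullback.diagonal f)

variable {E : MorphismProperty C} [E.IsStableUnderBaseChange]

/-- Membership of the second projection. -/
theorem snd_mem {X Y : C} (f : X ⟶ Y) (hf : E f) : E (pullback.snd f f) :=
  MorphismProperty.of_isPullback (IsPullback.of_hasPullback f f) hf

/-- Condition (Pr-I) of Definition 2.4, for a morphism whose truncatedness level is `n`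
(where level `0` corresponds to `(-2)`-truncated). -/
def PrI (F : TwoFF.{w₂, w₁} C E)
    (hd : ∀ ⦃X Y : C⦄ (f : X ⟶ Y), E f → E (pullback.diagonal f)) :
    ℕ → ∀ ⦃X Y : C⦄ (f : X ⟶ Y), E f → Prop
  | 0 => fun _ _ f hf => IsIso f ∧ ∃ L, Nonempty (L ⊣ F.push f hf)
  | n + 1 => fun _ _ f hf =>
      PrI F hd n (pullback.diagonal f) (hd f hf) ∧
      VertLeftAdj (F.pull (pullback.fst f f)) (F.push f hf)
        (F.push (pullback.snd f f) (snd_mem f hf)) (F.pull f)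
        ((F.baseChange (IsPullback.of_hasPullback f f) hf (snd_mem f hf)).symm)

/-- Condition (Pr-II) of Definition 2.4. -/
def PrII (F : TwoFF.{w₂, w₁} C E)
    (hd : ∀ ⦃X Y : C⦄ (f : X ⟶ Y), E f → E (pullback.diagonal f)) :
    ℕ → ∀ ⦃X Y : C⦄ (f : X ⟶ Y), E f → Prop
  | 0 => fun _ _ f hf => IsIso f ∧ ∃ R, Nonempty (F.pull f ⊣ R)
  | n + 1 => fun _ _ f hf =>
      PrII F hd n (pullback.diagonal f) (hd f hf) ∧
      VertRightAdj (F.push f hf) (F.pull (pullback.fst f f)) (F.pull f)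
        (F.push (pullback.snd f f) (snd_mem f hf))
        (F.baseChange (IsPullback.of_hasPullback f f) hf (snd_mem f hf))

/-- Condition (Ét-I) of Definition 2.4. -/
def EtI (F : TwoFF.{w₂, w₁} C E)
    (hd : ∀ ⦃X Y : C⦄ (f : X ⟶ Y), E f → E (pullback.diagonal f)) :
    ℕ → ∀ ⦃X Y : C⦄ (f : X ⟶ Y), E f → Prop
  | 0 => fun _ _ f hf => IsIso f ∧ ∃ R, Nonempty (F.push f hf ⊣ R)
  | n + 1 => fun _ _ f hf =>
      EtI F hd n (pullback.diagonal f) (hd f hf) ∧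
      VertRightAdj (F.pull (pullback.fst f f)) (F.push f hf)
        (F.push (pullback.snd f f) (snd_mem f hf)) (F.pull f)
        ((F.baseChange (IsPullback.of_hasPullback f f) hf (snd_mem f hf)).symm)

/-- Condition (Ét-II) of Definition 2.4. -/
def EtII (F : TwoFF.{w₂, w₁} C E)
    (hd : ∀ ⦃X Y : C⦄ (f : X ⟶ Y), E f → E (pullback.diagonal f)) :
    ℕ → ∀ ⦃X Y : C⦄ (f : X ⟶ Y), E f → Prop
  | 0 => fun _ _ f hf => IsIso f ∧ ∃ L, Nonempty (L ⊣ F.pull f)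
  | n + 1 => fun _ _ f hf =>
      EtII F hd n (pullback.diagonal f) (hd f hf) ∧
      VertLeftAdj (F.push f hf) (F.pull (pullback.fst f f)) (F.pull f)
        (F.push (pullback.snd f f) (snd_mem f hf))
        (F.baseChange (IsPullback.of_hasPullback f f) hf (snd_mem f hf))

/-- A condition holds *stably* if it holds for every base change of `f`, and, inductively,
the same is true for the diagonal of `f`. -/
def StablyAt (P : ℕ → ∀ ⦃X Y : C⦄ (f : X ⟶ Y), E f → Prop)
    (hd : ∀ ⦃X Y : C⦄ (f : X ⟶ Y), E f → E (pullback.diagonal f)) :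
    ℕ → ∀ ⦃X Y : C⦄ (f : X ⟶ Y), E f → Prop
  | 0 => fun _ Y f _ =>
      ∀ ⦃W Y' : C⦄ (gbar : W ⟶ _) (fbar : W ⟶ Y') (g : Y' ⟶ Y),
        IsPullback gbar fbar f g → ∀ hfbar : E fbar, P 0 fbar hfbar
  | n + 1 => fun _ Y f hf =>
      (∀ ⦃W Y' : C⦄ (gbar : W ⟶ _) (fbar : W ⟶ Y') (g : Y' ⟶ Y),
        IsPullback gbar fbar f g → ∀ hfbar : E fbar, P (n + 1) fbar hfbar) ∧
      StablyAt P hd n (pullback.diagonal f) (hd f hf)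

end SixFunctor

/-!
For an isomorphism `f`, base change along the pullback squares `(f, f, 𝟙, 𝟙)` and
`(𝟙, 𝟙, f, f)` makes `f^*` and `f_!` mutually inverse equivalences, so `f^* ⊣ f_!` and
`f_! ⊣ f^*`. At higher truncation levels, each of the four conditions on `f`, together with the
matching adjunction for the diagonal `δ`, gives that adjunction for `f` itself: whiskering the
invertible mate with `δ^*` (resp. `δ_!`) and using `δ ≫ p₁ = δ ≫ p₂ = 𝟙` identifies the adjoint
supplied by the condition with `f^*` (resp. `f_!`). Applied stably, this provides adjoints for
`f` and for the projections `p₁, p₂`. With adjoints on all four sides of the base change square,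
the mate occurring in a condition and the one occurring in its partner are conjugate (an iterated
mate is a conjugate), so one is invertible iff the other is; the diagonal is handled by
induction on the truncation level.
-/

namespace SixFunctor

open Functor

section Mates

variable {A B C D : Type*} [Category A] [Category B] [Category C] [Category D]

theorem isIso_mateEquiv_symm_iff_isIso_mateEquiv {L₁ : A ⥤ B} {R₁ : B ⥤ A} {L₂ : C ⥤ D}
    {R₂ : D ⥤ C} {F₁ : A ⥤ C} {U₁ : C ⥤ A} {F₂ : B ⥤ D} {U₂ : D ⥤ B}
    (adj₁ : L₁ ⊣ R₁) (adj₂ : L₂ ⊣ R₂) (adj₃ : F₁ ⊣ U₁) (adj₄ : F₂ ⊣ U₂)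
    (α : TwoSquare R₁ F₂ F₁ R₂) :
    IsIso ((mateEquiv adj₁ adj₂).symm α) ↔ IsIso (mateEquiv adj₄ adj₃ α) := by
  obtain ⟨β, rfl⟩ := (mateEquiv adj₁ adj₂).surjective α
  rw [Equiv.symm_apply_apply]
  change IsIso β ↔ IsIso (mateEquiv adj₄ adj₃ (mateEquiv adj₁ adj₂ β)).natTrans
  rw [iterated_mateEquiv_conjugateEquiv]
  exact ⟨fun _ ↦ conjugateEquiv_iso _ _ (β : F₁ ⋙ L₂ ⟶ L₁ ⋙ F₂),
    fun _ ↦ conjugateEquiv_of_iso (adj₁.comp adj₄) (adj₃.comp adj₂) β⟩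

end Mates

section IsoOfRetraction

variable {A B C : Type*} [Category A] [Category B] [Category C]

def isoOfSquareOfCompIsoIdRight {a l : A ⥤ B} {r t : B ⥤ C} {d : C ⥤ B}
    (μ : a ⋙ r ≅ l ⋙ t) (et : t ⋙ d ≅ 𝟭 B) (er : r ⋙ d ≅ 𝟭 B) : l ≅ a :=
  (rightUnitor l).symm ≪≫ isoWhiskerLeft l et.symm ≪≫ isoWhiskerRight μ.symm d ≪≫
    isoWhiskerLeft a er ≪≫ rightUnitor a

def isoOfSquareOfCompIsoIdLeft {l s : A ⥤ B} {a r : B ⥤ C} {d : B ⥤ A}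
    (ν : l ⋙ a ≅ s ⋙ r) (es : d ⋙ s ≅ 𝟭 B) (el : d ⋙ l ≅ 𝟭 B) : r ≅ a :=
  (leftUnitor r).symm ≪≫ isoWhiskerRight es.symm r ≪≫ isoWhiskerLeft d ν.symm ≪≫
    isoWhiskerRight el a ≪≫ leftUnitor a

end IsoOfRetraction

section Diagonal

variable {C : Type u} [Category.{v} C] [HasPullbacks C]

theorem isPullback_diagonal_of_isPullback {W X Y Y' : C} {gbar : W ⟶ X} {fbar : W ⟶ Y'}
    {f : X ⟶ Y} {g : Y' ⟶ Y} (sq : IsPullback gbar fbar f g) :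
    IsPullback gbar (pullback.diagonal fbar) (pullback.diagonal f)
      (pullback.map fbar fbar f f gbar gbar g sq.w.symm sq.w.symm) := by
  have hsnd : IsPullback (pullback.map fbar fbar f f gbar gbar g sq.w.symm sq.w.symm)
      (pullback.snd fbar fbar) (pullback.snd f f) gbar := by
    refine IsPullback.of_right ?_ (pullback.lift_snd _ _ _) (IsPullback.of_hasPullback f f)
    rw [pullback.lift_fst, sq.w]
    exact (IsPullback.of_hasPullback fbar fbar).paste_horiz sq
  refine IsPullback.of_bot ?_
    (by apply pullback.hom_ext <;> simp [pullback.lift_fst, pullback.lift_snd]) hsnd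
  rw [pullback.diagonal_snd, pullback.diagonal_snd]
  exact IsPullback.id_vert gbar

end Diagonal

section Transpose

variable {A B A' B' : Cat.{w₁, w₂}} {t : A ⥤ B} {l : A ⥤ A'} {r : B ⥤ B'} {b : A' ⥤ B'}
  {sq : t ⋙ r ≅ l ⋙ b}

theorem VertLeftAdj.transpose (h : VertLeftAdj t l r b sq) {t' : B ⥤ A}
    {b' : B' ⥤ A'} (adjt : t ⊣ t') (adjb : b ⊣ b') : VertRightAdj l t b r sq.symm := by
  obtain ⟨_, _, adjl, adjr, hmate⟩ := h
  exact ⟨t', b', adjt, adjb,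
    (isIso_mateEquiv_symm_iff_isIso_mateEquiv adjl adjr adjb adjt sq.inv).1 hmate⟩

theorem VertRightAdj.transpose (h : VertRightAdj t l r b sq) {t' : B ⥤ A}
    {b' : B' ⥤ A'} (adjt : t' ⊣ t) (adjb : b' ⊣ b) : VertLeftAdj l t b r sq.symm := by
  obtain ⟨_, _, adjl, adjr, hmate⟩ := h
  exact ⟨t', b', adjt, adjb,
    (isIso_mateEquiv_symm_iff_isIso_mateEquiv adjt adjb adjr adjl sq.hom).2 hmate⟩

end Transpose

namespace TwoFF

variable {C : Type u} [Category.{v} C] {E : MorphismProperty C} (F : TwoFF.{w₂, w₁} C E)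

def pushCongr {X Y : C} {u u' : X ⟶ Y} (h : u = u') (hu : E u) (hu' : E u') :
    F.push u hu ≅ F.push u' hu' :=
  eqToIso (by subst h; rfl)

def pullCompIsoIdOfRetraction {X Y : C} {s : X ⟶ Y} {r : Y ⟶ X} (h : s ≫ r = 𝟙 X) :
    F.pull r ⋙ F.pull s ≅ 𝟭 (F.D X) :=
  (F.pullComp s r).symm ≪≫ eqToIso (by rw [h]) ≪≫ F.pullId X

variable [E.IsMultiplicative]

def pushCompIsoIdOfRetraction {X Y : C} {s : X ⟶ Y} {r : Y ⟶ X} (h : s ≫ r = 𝟙 X)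
    (hs : E s) (hr : E r) : F.push s hs ⋙ F.push r hr ≅ 𝟭 (F.D X) :=
  (F.pushComp s r hs hr (E.comp_mem s r hs hr)).symm ≪≫ F.pushCongr h _ (E.id_mem X) ≪≫
    F.pushId X _

def pullEquivalenceOfIsIso {X Y : C} (f : X ⟶ Y) [IsIso f] (hf : E f) :
    F.D Y ≌ F.D X :=
  CategoryTheory.Equivalence.mk (F.pull f) (F.push f hf)
    ((isoWhiskerRight (F.pushId Y (E.id_mem Y)) _ ≪≫ leftUnitor _ ≪≫ F.pullId Y).symm ≪≫
      F.baseChange (IsPullback.of_vert_isIso ⟨by simp⟩ : IsPullback f f (𝟙 Y) (𝟙 Y)) _ hf)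
    (F.baseChange (IsPullback.of_vert_isIso ⟨by simp⟩ : IsPullback (𝟙 X) (𝟙 X) f f) hf
        (E.id_mem X) ≪≫
      isoWhiskerRight (F.pullId X) _ ≪≫ leftUnitor _ ≪≫ F.pushId X _)

theorem nonempty_pull_adj_push_of_isIso {X Y : C} (f : X ⟶ Y) [IsIso f] (hf : E f) :
    Nonempty (F.pull f ⊣ F.push f hf) :=
  ⟨(F.pullEquivalenceOfIsIso f hf).toAdjunction⟩

theorem nonempty_push_adj_pull_of_isIso {X Y : C} (f : X ⟶ Y) [IsIso f] (hf : E f) :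
    Nonempty (F.push f hf ⊣ F.pull f) :=
  ⟨(F.pullEquivalenceOfIsIso f hf).symm.toAdjunction⟩

end TwoFF

section Stably

variable {C : Type u} [Category.{v} C] [HasPullbacks C] {E : MorphismProperty C}
  {P : ℕ → ∀ ⦃X Y : C⦄ (f : X ⟶ Y), E f → Prop}
  {hd : ∀ ⦃X Y : C⦄ (f : X ⟶ Y), E f → E (pullback.diagonal f)}

theorem StablyAt.apply {n : ℕ} {X Y W Y' : C} {f : X ⟶ Y} {hf : E f}
    (h : StablyAt P hd n f hf) {gbar : W ⟶ X} {fbar : W ⟶ Y'} {g : Y' ⟶ Y}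
    (sq : IsPullback gbar fbar f g) (hfbar : E fbar) : P n fbar hfbar := by
  cases n with
  | zero => exact h gbar fbar g sq hfbar
  | succ n => exact h.1 gbar fbar g sq hfbar

theorem StablyAt.self {n : ℕ} {X Y : C} {f : X ⟶ Y} {hf : E f} (h : StablyAt P hd n f hf) :
    P n f hf :=
  h.apply (IsPullback.id_horiz f) hf

theorem StablyAt.of_isPullback {n : ℕ} {X Y W Y' : C} {f : X ⟶ Y} {hf : E f}
    (h : StablyAt P hd n f hf) {gbar : W ⟶ X} {fbar : W ⟶ Y'} {g : Y' ⟶ Y}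
    (sq : IsPullback gbar fbar f g) (hfbar : E fbar) : StablyAt P hd n fbar hfbar := by
  induction n generalizing X Y W Y' with
  | zero => exact fun _ _ _ _ _ sq' ↦ h.apply (sq'.paste_horiz sq)
  | succ n ih =>
    exact ⟨fun _ _ _ _ _ sq' ↦ h.apply (sq'.paste_horiz sq),
      ih h.2 (isPullback_diagonal_of_isPullback sq) _⟩

theorem StablyAt.induction_diagonal (A : ∀ ⦃X Y : C⦄ (f : X ⟶ Y), E f → Prop)
    (zero : ∀ ⦃X Y : C⦄ (f : X ⟶ Y) (hf : E f), P 0 f hf → A f hf)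
    (succ : ∀ (n : ℕ) ⦃X Y : C⦄ (f : X ⟶ Y) (hf : E f),
      P (n + 1) f hf → A (pullback.diagonal f) (hd f hf) → A f hf)
    {n : ℕ} {X Y : C} {f : X ⟶ Y} {hf : E f} (h : StablyAt P hd n f hf) : A f hf := by
  induction n generalizing X Y with
  | zero => exact zero f hf h.self
  | succ n ih => exact succ n f hf h.self (ih h.2)

variable [E.IsStableUnderBaseChange]

theorem fst_mem {X Y : C} (f : X ⟶ Y) (hf : E f) : E (pullback.fst f f) :=
  MorphismProperty.of_isPullback (IsPullback.of_hasPullback f f).flip hf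

variable [E.IsMultiplicative] (F : TwoFF.{w₂, w₁} C E)

theorem PrI.nonempty_pull_adj_push {n : ℕ} {X Y : C} {f : X ⟶ Y} {hf : E f}
    (h : PrI F hd (n + 1) f hf)
    (adjδ : F.pull (pullback.diagonal f) ⊣ F.push (pullback.diagonal f) (hd f hf)) :
    Nonempty (F.pull f ⊣ F.push f hf) := by
  obtain ⟨-, fL, p₂L, adj₁, adj₂, hmate⟩ := h
  have e : p₂L ⋙ F.pull (pullback.diagonal f) ≅ 𝟭 _ :=
    ((adj₂.comp adjδ).ofNatIsoRight (F.pushCompIsoIdOfRetraction (pullback.diagonal_snd f)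
      _ _)).leftAdjointUniq .id
  exact ⟨adj₁.ofNatIsoLeft (isoOfSquareOfCompIsoIdRight (@asIso _ _ _ _ _ hmate)
    (F.pullCompIsoIdOfRetraction (pullback.diagonal_fst f)) e)⟩

theorem PrII.nonempty_pull_adj_push {n : ℕ} {X Y : C} {f : X ⟶ Y} {hf : E f}
    (h : PrII F hd (n + 1) f hf)
    (adjδ : F.pull (pullback.diagonal f) ⊣ F.push (pullback.diagonal f) (hd f hf)) :
    Nonempty (F.pull f ⊣ F.push f hf) := by
  obtain ⟨-, p₁R, fR, adj₁, adj₂, hmate⟩ := h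
  have e : F.push (pullback.diagonal f) (hd f hf) ⋙ p₁R ≅ 𝟭 _ :=
    ((adj₁.comp adjδ).ofNatIsoLeft (F.pullCompIsoIdOfRetraction
      (pullback.diagonal_fst f))).rightAdjointUniq .id
  exact ⟨adj₂.ofNatIsoRight (isoOfSquareOfCompIsoIdLeft (@asIso _ _ _ _ _ hmate)
    (F.pushCompIsoIdOfRetraction (pullback.diagonal_snd f) _ _) e)⟩

theorem EtI.nonempty_push_adj_pull {n : ℕ} {X Y : C} {f : X ⟶ Y} {hf : E f}
    (h : EtI F hd (n + 1) f hf)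
    (adjδ : F.push (pullback.diagonal f) (hd f hf) ⊣ F.pull (pullback.diagonal f)) :
    Nonempty (F.push f hf ⊣ F.pull f) := by
  obtain ⟨-, fR, p₂R, adj₁, adj₂, hmate⟩ := h
  have e : p₂R ⋙ F.pull (pullback.diagonal f) ≅ 𝟭 _ :=
    ((adjδ.comp adj₂).ofNatIsoLeft (F.pushCompIsoIdOfRetraction (pullback.diagonal_snd f)
      _ _)).rightAdjointUniq .id
  exact ⟨adj₁.ofNatIsoRight (isoOfSquareOfCompIsoIdRight (@asIso _ _ _ _ _ hmate).symm
    (F.pullCompIsoIdOfRetraction (pullback.diagonal_fst f)) e)⟩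

theorem EtII.nonempty_push_adj_pull {n : ℕ} {X Y : C} {f : X ⟶ Y} {hf : E f}
    (h : EtII F hd (n + 1) f hf)
    (adjδ : F.push (pullback.diagonal f) (hd f hf) ⊣ F.pull (pullback.diagonal f)) :
    Nonempty (F.push f hf ⊣ F.pull f) := by
  obtain ⟨-, p₁L, fL, adj₁, adj₂, hmate⟩ := h
  have e : F.push (pullback.diagonal f) (hd f hf) ⋙ p₁L ≅ 𝟭 _ :=
    ((adjδ.comp adj₁).ofNatIsoRight (F.pullCompIsoIdOfRetraction
      (pullback.diagonal_fst f))).leftAdjointUniq .id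
  exact ⟨adj₂.ofNatIsoLeft (isoOfSquareOfCompIsoIdLeft (@asIso _ _ _ _ _ hmate).symm
    (F.pushCompIsoIdOfRetraction (pullback.diagonal_snd f) _ _) e)⟩

variable {F}

theorem StablyAt.nonempty_pull_adj_push_of_prI {n : ℕ} {X Y : C} {f : X ⟶ Y} {hf : E f}
    (h : StablyAt (PrI F hd) hd n f hf) : Nonempty (F.pull f ⊣ F.push f hf) :=
  h.induction_diagonal (fun _ _ f hf ↦ Nonempty (F.pull f ⊣ F.push f hf))
    (fun _ _ f hf h ↦ haveI : IsIso f := h.1; F.nonempty_pull_adj_push_of_isIso f hf)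
    (fun _ _ _ _ _ h ⟨adjδ⟩ ↦ h.nonempty_pull_adj_push F adjδ)

theorem StablyAt.nonempty_pull_adj_push_of_prII {n : ℕ} {X Y : C} {f : X ⟶ Y} {hf : E f}
    (h : StablyAt (PrII F hd) hd n f hf) : Nonempty (F.pull f ⊣ F.push f hf) :=
  h.induction_diagonal (fun _ _ f hf ↦ Nonempty (F.pull f ⊣ F.push f hf))
    (fun _ _ f hf h ↦ haveI : IsIso f := h.1; F.nonempty_pull_adj_push_of_isIso f hf)
    (fun _ _ _ _ _ h ⟨adjδ⟩ ↦ h.nonempty_pull_adj_push F adjδ)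

theorem StablyAt.nonempty_push_adj_pull_of_etI {n : ℕ} {X Y : C} {f : X ⟶ Y} {hf : E f}
    (h : StablyAt (EtI F hd) hd n f hf) : Nonempty (F.push f hf ⊣ F.pull f) :=
  h.induction_diagonal (fun _ _ f hf ↦ Nonempty (F.push f hf ⊣ F.pull f))
    (fun _ _ f hf h ↦ haveI : IsIso f := h.1; F.nonempty_push_adj_pull_of_isIso f hf)
    (fun _ _ _ _ _ h ⟨adjδ⟩ ↦ h.nonempty_push_adj_pull F adjδ)

theorem StablyAt.nonempty_push_adj_pull_of_etII {n : ℕ} {X Y : C} {f : X ⟶ Y} {hf : E f}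
    (h : StablyAt (EtII F hd) hd n f hf) : Nonempty (F.push f hf ⊣ F.pull f) :=
  h.induction_diagonal (fun _ _ f hf ↦ Nonempty (F.push f hf ⊣ F.pull f))
    (fun _ _ f hf h ↦ haveI : IsIso f := h.1; F.nonempty_push_adj_pull_of_isIso f hf)
    (fun _ _ _ _ _ h ⟨adjδ⟩ ↦ h.nonempty_push_adj_pull F adjδ)

theorem StablyAt.prII_of_prI {n : ℕ} {X Y : C} {f : X ⟶ Y} {hf : E f}
    (h : StablyAt (PrI F hd) hd n f hf) : PrII F hd n f hf := by
  induction n generalizing X Y with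
  | zero => exact ⟨h.self.1, _, h.nonempty_pull_adj_push_of_prI⟩
  | succ n ih =>
    obtain ⟨adjf⟩ := h.nonempty_pull_adj_push_of_prI
    obtain ⟨adjfst⟩ := (h.of_isPullback (IsPullback.of_hasPullback f f).flip
      (fst_mem f hf)).nonempty_pull_adj_push_of_prI
    exact ⟨ih h.2, h.self.2.transpose adjfst adjf⟩

theorem StablyAt.prI_of_prII {n : ℕ} {X Y : C} {f : X ⟶ Y} {hf : E f}
    (h : StablyAt (PrII F hd) hd n f hf) : PrI F hd n f hf := by
  induction n generalizing X Y with
  | zero => exact ⟨h.self.1, _, h.nonempty_pull_adj_push_of_prII⟩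
  | succ n ih =>
    obtain ⟨adjf⟩ := h.nonempty_pull_adj_push_of_prII
    obtain ⟨adjsnd⟩ := (h.of_isPullback (IsPullback.of_hasPullback f f)
      (snd_mem f hf)).nonempty_pull_adj_push_of_prII
    exact ⟨ih h.2, h.self.2.transpose adjf adjsnd⟩

theorem StablyAt.etII_of_etI {n : ℕ} {X Y : C} {f : X ⟶ Y} {hf : E f}
    (h : StablyAt (EtI F hd) hd n f hf) : EtII F hd n f hf := by
  induction n generalizing X Y with
  | zero => exact ⟨h.self.1, _, h.nonempty_push_adj_pull_of_etI⟩
  | succ n ih =>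
    obtain ⟨adjf⟩ := h.nonempty_push_adj_pull_of_etI
    obtain ⟨adjfst⟩ := (h.of_isPullback (IsPullback.of_hasPullback f f).flip
      (fst_mem f hf)).nonempty_push_adj_pull_of_etI
    exact ⟨ih h.2, h.self.2.transpose adjfst adjf⟩

theorem StablyAt.etI_of_etII {n : ℕ} {X Y : C} {f : X ⟶ Y} {hf : E f}
    (h : StablyAt (EtII F hd) hd n f hf) : EtI F hd n f hf := by
  induction n generalizing X Y with
  | zero => exact ⟨h.self.1, _, h.nonempty_push_adj_pull_of_etII⟩
  | succ n ih =>
    obtain ⟨adjf⟩ := h.nonempty_push_adj_pull_of_etII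
    obtain ⟨adjsnd⟩ := (h.of_isPullback (IsPullback.of_hasPullback f f)
      (snd_mem f hf)).nonempty_push_adj_pull_of_etII
    exact ⟨ih h.2, h.self.2.transpose adjf adjsnd⟩

end Stably

/-- Lemma 2.5. Let `D : Corr(C,E) → Cat_∞` be a two-functor formalism on a
geometric set-up `(C,E)` and `f : X ⟶ Y` a morphism in `E` (which is `n`-truncated, the level
being recorded by the index `n` of the inductively defined conditions). Then:
(1) if `f` satisfies (Pr-I) stably, then `f` satisfies (Pr-II);
(2) if `f` satisfies (Pr-II) stably, then `f` satisfies (Pr-I);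
(3) if `f` satisfies (Ét-I) stably, then `f` satisfies (Ét-II);
(4) if `f` satisfies (Ét-II) stably, then `f` satisfies (Ét-I). -/
theorem stably_PrI_implies_PrII {C : Type u} [Category.{v} C] [HasPullbacks C]
    {E : MorphismProperty C} [E.IsStableUnderBaseChange] [E.IsMultiplicative]
    (F : TwoFF.{w₂, w₁} C E)
    (hd : ∀ ⦃X Y : C⦄ (f : X ⟶ Y), E f → E (pullback.diagonal f))
    (n : ℕ) {X Y : C} (f : X ⟶ Y) (hf : E f) :
    (StablyAt (PrI F hd) hd n f hf → PrII F hd n f hf) ∧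
    (StablyAt (PrII F hd) hd n f hf → PrI F hd n f hf) ∧
    (StablyAt (EtI F hd) hd n f hf → EtII F hd n f hf) ∧
    (StablyAt (EtII F hd) hd n f hf → EtI F hd n f hf) :=
  ⟨StablyAt.prII_of_prI, StablyAt.prI_of_prII, StablyAt.etII_of_etI, StablyAt.etI_of_etII⟩

end SixFunctor
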